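/- Let Q_q = [[b, b/a], [1, 0]] with a, b nonzero reals. For even n, the eigenvalues of the Hadamard product Q_q^n ∘ Q_q^(−n) are 1 and 1 + 2(b/a) q_n²; equivalently, its characteristic polynomial is (λ − 1)(λ − (1 + 2(b/a) q_n²)). -/

import Mathlib

/-- Bi-periodic Fibonacci sequence: q 0 = 0, q 1 = 1,
    q n = a * q (n-1) + q (n-2) if n even, q n = b * q (n-1) + q (n-2) if n odd. -/
def bpFib (a b : ℝ) : ℕ → ℝ
  | 0 => 0
  | 1 => 1
  | n + 2 => (if Even (n + 2) then a else b) * bpFib a b (n + 1) + bpFib a b n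

/-- Bi-periodic Lucas sequence: l 0 = 2, l 1 = a,
    l n = b * l (n-1) + l (n-2) if n even, l n = a * l (n-1) + l (n-2) if n odd. -/
def bpLucas (a b : ℝ) : ℕ → ℝ
  | 0 => 2
  | 1 => a
  | n + 2 => (if Even (n + 2) then b else a) * bpLucas a b (n + 1) + bpLucas a b n

/-!
For an invertible `M = !![p, q; r, s]` with `d = det M`, the Hadamard product `M ⊙ M⁻¹` is
`!![ps, -q²; -r², ps] / d`, whose eigenvalues are `(ps - qr) / d = 1` and `(ps + qr) / d = 1 + 2qr / d`.
For `M = Q ^ n` with `n` even, `d = (b / a) ^ n`. Since `Q ^ n` commutes with `Q`, its off-diagonal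
entries satisfy `(Q ^ n) 0 1 = (b / a) * (Q ^ n) 1 0`, and `Q ^ 2 = b Q + (b / a) 1` makes
`(Q ^ n) 1 0` satisfy the recurrence that gives `(Q ^ n) 1 0 = (b / a) ^ (n / 2) * q n`.
-/

open Polynomial Matrix

theorem hadamard_inv_fin_two {K : Type*} [Field K] (M : Matrix (Fin 2) (Fin 2) K) :
    M ⊙ M⁻¹ = !![M 0 0 * M 1 1 / M.det, -M 0 1 ^ 2 / M.det;
      -M 1 0 ^ 2 / M.det, M 0 0 * M 1 1 / M.det] := by
  rw [inv_def, Ring.inverse_eq_inv', adjugate_fin_two]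
  ext i j
  fin_cases i <;> fin_cases j <;> simp [div_eq_mul_inv] <;> ring

theorem charpoly_hadamard_inv_fin_two {K : Type*} [Field K] (M : Matrix (Fin 2) (Fin 2) K)
    (hM : M.det ≠ 0) :
    (M ⊙ M⁻¹).charpoly = (X - C 1) * (X - C (1 + 2 * M 0 1 * M 1 0 / M.det)) := by
  rw [hadamard_inv_fin_two, charpoly_fin_two, trace_fin_two_of, det_fin_two_of]
  have htrace : M 0 0 * M 1 1 / M.det + M 0 0 * M 1 1 / M.det
      = 1 + (1 + 2 * M 0 1 * M 1 0 / M.det) := by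
    rw [det_fin_two] at hM ⊢
    field_simp
    ring
  have hdet : M 0 0 * M 1 1 / M.det * (M 0 0 * M 1 1 / M.det)
      - -M 0 1 ^ 2 / M.det * (-M 1 0 ^ 2 / M.det)
      = 1 + 2 * M 0 1 * M 1 0 / M.det := by
    rw [det_fin_two] at hM ⊢
    field_simp
    ring
  rw [htrace, hdet, C_add, C_1]
  ring

section Companion

variable {R : Type*} [CommRing R] (b c : R)

theorem companion_fin_two_sq :
    !![b, c; 1, 0] ^ 2 = b • !![b, c; 1, 0] + c • (1 : Matrix (Fin 2) (Fin 2) R) := by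
  rw [sq, mul_fin_two, one_fin_two]
  ext i j
  fin_cases i <;> fin_cases j <;> simp

theorem companion_fin_two_pow_add_two (n : ℕ) :
    !![b, c; 1, 0] ^ (n + 2) = b • !![b, c; 1, 0] ^ (n + 1) + c • !![b, c; 1, 0] ^ n := by
  rw [pow_add, companion_fin_two_sq, mul_add, mul_smul_comm, mul_smul_comm, mul_one, pow_succ]

theorem apply_zero_one_of_commute_companion_fin_two {A : Matrix (Fin 2) (Fin 2) R}
    (hA : Commute A !![b, c; 1, 0]) : A 0 1 = c * A 1 0 := by
  have h := congrFun (congrFun hA.eq 0) 0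
  simp only [mul_apply, Fin.sum_univ_two, of_apply, cons_val', cons_val_zero, cons_val_one,
    cons_val_fin_one, mul_one] at h
  linear_combination h

end Companion

theorem bpFib_two_mul_add_two (a b : ℝ) (m : ℕ) :
    bpFib a b (2 * m + 2) = a * bpFib a b (2 * m + 1) + bpFib a b (2 * m) := by
  simp [bpFib, Nat.even_add]

theorem bpFib_two_mul_add_three (a b : ℝ) (m : ℕ) :
    bpFib a b (2 * m + 3) = b * bpFib a b (2 * m + 2) + bpFib a b (2 * m + 1) := by
  simp [bpFib, Nat.even_add, parity_simps]

theorem pow_apply_one_zero_eq_bpFib (a b : ℝ) (ha : a ≠ 0) (n : ℕ) :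
    (!![b, b / a; 1, 0] ^ n) 1 0 = (b / a) ^ (n / 2) * bpFib a b n := by
  set Q : Matrix (Fin 2) (Fin 2) ℝ := !![b, b / a; 1, 0] with hQ
  have step (k : ℕ) : (Q ^ (k + 2)) 1 0 = b * (Q ^ (k + 1)) 1 0 + b / a * (Q ^ k) 1 0 := by
    rw [hQ, companion_fin_two_pow_add_two]
    rfl
  suffices h : ∀ m : ℕ, (Q ^ (2 * m)) 1 0 = (b / a) ^ m * bpFib a b (2 * m) ∧
      (Q ^ (2 * m + 1)) 1 0 = (b / a) ^ m * bpFib a b (2 * m + 1) by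
    obtain ⟨m, rfl | rfl⟩ := Nat.even_or_odd' n
    · simpa using (h m).1
    · simpa [Nat.mul_add_div] using (h m).2
  intro m
  induction m with
  | zero => simp [hQ, bpFib]
  | succ m ih =>
    rw [mul_add_one]
    have heven : (Q ^ (2 * m + 2)) 1 0 = (b / a) ^ (m + 1) * bpFib a b (2 * m + 2) := by
      rw [step, ih.1, ih.2, bpFib_two_mul_add_two, pow_succ]
      field_simp
    refine ⟨heven, ?_⟩
    rw [show 2 * m + 2 + 1 = 2 * m + 1 + 2 by omega, step, heven, ih.2, bpFib_two_mul_add_three]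
    ring

open Polynomial in
theorem hadamard_charpoly_even (a b : ℝ) (ha : a ≠ 0) (hb : b ≠ 0) (n : ℕ) (h : Even n) :
    (Matrix.hadamard ((!![b, b / a; 1, 0] : Matrix (Fin 2) (Fin 2) ℝ) ^ n)
        (((!![b, b / a; 1, 0] : Matrix (Fin 2) (Fin 2) ℝ) ^ n)⁻¹)).charpoly =
      (X - C 1) * (X - C (1 + 2 * (b / a) * (bpFib a b n) ^ 2)) := by
  obtain ⟨m, rfl⟩ := h
  set Q : Matrix (Fin 2) (Fin 2) ℝ := !![b, b / a; 1, 0] with hQ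
  have hdet : (Q ^ (m + m)).det = (b / a) ^ (m + m) := by
    rw [det_pow, show Q.det = -(b / a) by simp [hQ], Even.neg_pow ⟨m, rfl⟩]
  have hoff : (Q ^ (m + m)) 0 1 = b / a * (Q ^ (m + m)) 1 0 :=
    apply_zero_one_of_commute_companion_fin_two b (b / a) (Commute.self_pow Q _).symm
  rw [charpoly_hadamard_inv_fin_two _ (hdet ▸ pow_ne_zero _ (div_ne_zero hb ha)), hoff, hdet,
    pow_apply_one_zero_eq_bpFib a b ha, ← two_mul, Nat.mul_div_cancel_left _ two_pos]
  congr 3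
  rw [pow_mul']
  field_simp
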